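/- Suppose a : ℕ → ℝ is an increasing sequence with a(n) → ∞, k and the resolvent r are summable, x is the solution of the Volterra summation equation, and Λ_a|x| < ∞. Then Λ_a|H| ≤ (1 + Σ_{j=0}^∞ |k(j)|) · Λ_a|x|. -/

import Mathlib

open Filter Finset

/-- `r` is the resolvent of the kernel `k`:
`r(0) = 1` and `r(n+1) = Σ_{j=0}^n k(n−j) r(j)`. -/
def IsResolvent (k r : ℕ → ℝ) : Prop :=
  r 0 = 1 ∧ ∀ n : ℕ, r (n + 1) = ∑ j ∈ Finset.range (n + 1), k (n - j) * r j

/-- `x` solves the Volterra summation equation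
`x(n+1) = Σ_{j=0}^n k(n−j) x(j) + H(n+1)`. -/
def IsVolterraSol (k H x : ℕ → ℝ) : Prop :=
  ∀ n : ℕ, x (n + 1) = (∑ j ∈ Finset.range (n + 1), k (n - j) * x j) + H (n + 1)

/-- `Λ_a|y| = limsup_{n→∞} |y(n)|/a(n)`, computed in the extended reals. -/
noncomputable def Lam (a y : ℕ → ℝ) : EReal :=
  Filter.limsup (fun n => ((|y n| / a n : ℝ) : EReal)) atTop

/-!
Rewriting the equation as `H(n+1) = x(n+1) - Σ_{j ≤ n} k(n-j) x(j)`, a bound `|x(j)| ≤ b(j)` by a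
nondecreasing `b` gives `|H(n+1)| ≤ (1 + Σ|k|) b(n+1)`. If `Λ_a|x| < B`, then `|x| ≤ B a + C` for
some constant `C`, and `C / a(n) → 0`; letting `B` decrease to `Λ_a|x|` gives the claim.
-/

lemma sum_range_abs_reflect_le_tsum {k : ℕ → ℝ} (hk : Summable fun j => |k j|) (n : ℕ) :
    ∑ j ∈ range (n + 1), |k (n - j)| ≤ ∑' j, |k j| := by
  have hreflect := sum_range_reflect (fun j => |k j|) (n + 1)
  rw [add_tsub_cancel_right] at hreflect
  rw [hreflect]
  exact hk.sum_le_tsum _ fun j _ => abs_nonneg _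

lemma IsVolterraSol.abs_forcing_le {k H x b : ℕ → ℝ} (hx : IsVolterraSol k H x)
    (hk : Summable fun j => |k j|) (hb : Monotone b) (hxb : ∀ n, |x n| ≤ b n) (n : ℕ) :
    |H (n + 1)| ≤ (1 + ∑' j, |k j|) * b (n + 1) := by
  have hb0 : 0 ≤ b n := (abs_nonneg _).trans (hxb n)
  have hconv : |∑ j ∈ range (n + 1), k (n - j) * x j| ≤ (∑' j, |k j|) * b n :=
    calc |∑ j ∈ range (n + 1), k (n - j) * x j|
        ≤ ∑ j ∈ range (n + 1), |k (n - j)| * b n := by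
          refine (abs_sum_le_sum_abs _ _).trans (sum_le_sum fun j hj => ?_)
          rw [abs_mul]
          have hjn : j ≤ n := Nat.lt_succ_iff.1 (mem_range.1 hj)
          exact mul_le_mul_of_nonneg_left ((hxb j).trans (hb hjn)) (abs_nonneg _)
      _ ≤ (∑' j, |k j|) * b n := by
          rw [← sum_mul]
          exact mul_le_mul_of_nonneg_right (sum_range_abs_reflect_le_tsum hk n) hb0
  have hK : 0 ≤ ∑' j, |k j| := tsum_nonneg fun _ => abs_nonneg _
  calc |H (n + 1)| = |x (n + 1) - ∑ j ∈ range (n + 1), k (n - j) * x j| := by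
        rw [hx n, add_sub_cancel_left]
    _ ≤ b (n + 1) + (∑' j, |k j|) * b n := (abs_sub _ _).trans (add_le_add (hxb _) hconv)
    _ ≤ (1 + ∑' j, |k j|) * b (n + 1) := by
        linarith [mul_le_mul_of_nonneg_left (hb n.le_succ) hK]

lemma exists_forall_le_add_of_eventually_le {f g : ℕ → ℝ} (h : ∀ᶠ n in atTop, f n ≤ g n) :
    ∃ C, ∀ n, f n ≤ g n + C := by
  obtain ⟨N, hN⟩ := eventually_atTop.1 h
  refine ⟨∑ j ∈ range N, |f j - g j|, fun n => ?_⟩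
  have hC : 0 ≤ ∑ j ∈ range N, |f j - g j| := sum_nonneg fun _ _ => abs_nonneg _
  rcases lt_or_ge n N with hn | hn
  · have hn_le := single_le_sum (f := fun j => |f j - g j|) (fun _ _ => abs_nonneg _)
      (mem_range.2 hn)
    linarith [le_abs_self (f n - g n)]
  · linarith [hN n hn]

section Lam

variable {a y : ℕ → ℝ}

lemma Lam_nonneg (ha : Tendsto a atTop atTop) : 0 ≤ Lam a y :=
  le_limsup_of_frequently_le ((ha.eventually_gt_atTop 0).mono fun n hn => by
    exact_mod_cast div_nonneg (abs_nonneg (y n)) hn.le).frequently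

lemma eventually_abs_le_of_Lam_lt (ha : Tendsto a atTop atTop) {B : ℝ} (h : Lam a y < B) :
    ∀ᶠ n in atTop, |y n| ≤ B * a n := by
  filter_upwards [eventually_lt_of_limsup_lt h, ha.eventually_gt_atTop 0] with n hn hpos
  exact ((div_le_iff₀ hpos).1 (EReal.coe_lt_coe_iff.1 hn).le)

lemma Lam_le_of_eventually_abs_le (ha : Tendsto a atTop atTop) {B C : ℝ}
    (h : ∀ᶠ n in atTop, |y n| ≤ B * a n + C) : Lam a y ≤ B := by
  have hlim : Tendsto (fun n => ((B + C / a n : ℝ) : EReal)) atTop (nhds B) := by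
    have := tendsto_const_nhds.add (ha.const_div_atTop C) (a := B)
    rw [add_zero] at this
    exact (continuous_coe_real_ereal.tendsto B).comp this
  rw [Lam, ← hlim.limsup_eq]
  refine limsup_le_limsup ?_
  filter_upwards [h, ha.eventually_gt_atTop 0] with n hn hpos
  refine EReal.coe_le_coe_iff.2 ((div_le_iff₀ hpos).2 ?_)
  rwa [add_mul, div_mul_cancel₀ _ hpos.ne']

end Lam

theorem stmt9_general (k H x : ℕ → ℝ)
    (a : ℕ → ℝ) (ha : StrictMono a) (ha' : Tendsto a atTop atTop)
    (hk : Summable fun j => |k j|)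
    (hx : IsVolterraSol k H x)
    (hxfin : Lam a x < ⊤) :
    Lam a H ≤ ((1 + ∑' j : ℕ, |k j| : ℝ) : EReal) * Lam a x := by
  set K := ∑' j, |k j|
  have hK : 0 ≤ K := tsum_nonneg fun _ => abs_nonneg _
  have hx0 : 0 ≤ Lam a x := Lam_nonneg ha'
  lift Lam a x to ℝ using ⟨hxfin.ne, (hx0.trans_lt' EReal.bot_lt_zero).ne'⟩ with ℓ hℓ
  have hH : ∀ B : ℝ, ℓ < B → Lam a H ≤ ((1 + K) * B : ℝ) := by
    intro B hB
    have hB0 : 0 ≤ B := (EReal.coe_nonneg.1 hx0).trans hB.le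
    obtain ⟨C, hC⟩ := exists_forall_le_add_of_eventually_le
      (eventually_abs_le_of_Lam_lt ha' (hℓ ▸ EReal.coe_lt_coe_iff.2 hB))
    refine Lam_le_of_eventually_abs_le ha' (C := (1 + K) * C) ?_
    refine eventually_atTop.2 ⟨1, fun m hm => ?_⟩
    obtain ⟨n, rfl⟩ := Nat.exists_eq_add_of_le' hm
    calc |H (n + 1)| ≤ (1 + K) * (B * a (n + 1) + C) :=
          hx.abs_forcing_le hk ((ha.monotone.const_mul hB0).add_const C) hC n
      _ = (1 + K) * B * a (n + 1) + (1 + K) * C := by ring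
  rw [← EReal.coe_mul]
  refine ge_of_tendsto (x := nhdsWithin ℓ (Set.Ioi ℓ)) ?_ (eventually_nhdsWithin_of_forall hH)
  exact ((continuous_coe_real_ereal.comp (continuous_const.mul continuous_id)).tendsto ℓ).mono_left
    nhdsWithin_le_nhds

theorem stmt9 (k r H x : ℕ → ℝ) (ξ : ℝ)
    (a : ℕ → ℝ) (ha : StrictMono a) (ha' : Tendsto a atTop atTop)
    (hk : Summable fun j => |k j|)
    (hres : IsResolvent k r) (hrs : Summable fun j => |r j|)
    (hx0 : x 0 = ξ) (hx : IsVolterraSol k H x)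
    (hxfin : Lam a x < ⊤) :
    Lam a H ≤ ((1 + ∑' j : ℕ, |k j| : ℝ) : EReal) * Lam a x :=
  stmt9_general k H x a ha ha' hk hx hxfin
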